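/- arXiv:2512.00755 — 6 statements merged into one kernel-verified Lean document; each statement's English description precedes it below -/
import Mathlib

section
/- Let k₁, k₂ > 0 and let z, u, s, v, w : ℝ → ℝ be differentiable functions satisfying the kinetic system for all t ∈ ℝ, with initial conditions s(0) = 0 and w(0) = 0. Set z₀ = z(0) and c = u(0) - v(0). Then for all t ∈ ℝ the reduced system holds: u'(t) = -k₁ u(t)(u(t) - v(t) + z₀ - c), v'(t) = -k₂ v(t)(v(t) - u(t) + c)², and w'(t) = k₂ v(t)(v(t) - u(t) + c)². -/
/-- Reduction of the kinetic coral-calcification system to the three-variable system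
in `u`, `v`, `w`, with `z₀ = z 0` and `c = u 0 - v 0`, assuming `s 0 = 0` and `w 0 = 0`. -/
theorem stmt3 (k₁ k₂ : ℝ) (hk₁ : 0 < k₁) (hk₂ : 0 < k₂)
    (z u s v w : ℝ → ℝ)
    (hz : ∀ t : ℝ, HasDerivAt z (-k₁ * u t * z t + k₂ * v t * (s t) ^ 2) t)
    (hu : ∀ t : ℝ, HasDerivAt u (-k₁ * u t * z t) t)
    (hs : ∀ t : ℝ, HasDerivAt s (k₁ * u t * z t - k₂ * v t * (s t) ^ 2) t)
    (hv : ∀ t : ℝ, HasDerivAt v (-k₂ * v t * (s t) ^ 2) t)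
    (hw : ∀ t : ℝ, HasDerivAt w (k₂ * v t * (s t) ^ 2) t)
    (hs0 : s 0 = 0) (hw0 : w 0 = 0) :
    ∀ t : ℝ,
      HasDerivAt u (-k₁ * u t * (u t - v t + z 0 - (u 0 - v 0))) t ∧
      HasDerivAt v (-k₂ * v t * (v t - u t + (u 0 - v 0)) ^ 2) t ∧
      HasDerivAt w (k₂ * v t * (v t - u t + (u 0 - v 0)) ^ 2) t := by
  -- conserved quantity 1 : s + u - v is constant
  have hc1 : ∀ t : ℝ, HasDerivAt (fun t => s t + u t - v t) 0 t := by
    intro t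
    have := ((hs t).add (hu t)).sub (hv t)
    exact this.congr_deriv (by ring)
  have hs_eq : ∀ t : ℝ, s t = v t - u t + (u 0 - v 0) := by
    intro t
    have hconst : (fun t => s t + u t - v t) t = (fun t => s t + u t - v t) 0 :=
      is_const_of_deriv_eq_zero (fun x => (hc1 x).differentiableAt)
        (fun x => (hc1 x).deriv) t 0
    simp only [hs0] at hconst
    linarith [hconst]
  -- conserved quantity 2 : z - u + v is constant
  have hc2 : ∀ t : ℝ, HasDerivAt (fun t => z t - u t + v t) 0 t := by
    intro t
    have := ((hz t).sub (hu t)).add (hv t)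
    exact this.congr_deriv (by ring)
  have hz_eq : ∀ t : ℝ, z t = u t - v t + z 0 - (u 0 - v 0) := by
    intro t
    have hconst : (fun t => z t - u t + v t) t = (fun t => z t - u t + v t) 0 :=
      is_const_of_deriv_eq_zero (fun x => (hc2 x).differentiableAt)
        (fun x => (hc2 x).deriv) t 0
    simp only at hconst
    linarith [hconst]
  intro t
  refine ⟨?_, ?_, ?_⟩
  · have := hu t
    rwa [hz_eq t] at this
  · have := hv t
    rwa [hs_eq t] at this
  · have := hw t
    rwa [hs_eq t] at this
end

section
/- Let σ > 0, η > 0 and β < 0. Then the origin is locally asymptotically stable for the planar system u' = -u(u - v + σ - β), v' = -η v (v - u + β)²: (i) for every ε > 0 there exists δ > 0 such that every differentiable solution (u, v) : ℝ → ℝ × ℝ of the system with u(0)² + v(0)² < δ² satisfies u(t)² + v(t)² < ε² for all t ≥ 0; and (ii) there exists δ₀ > 0 such that every such solution with u(0)² + v(0)² < δ₀² satisfies (u(t), v(t)) → (0, 0) as t → ∞. -/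
open Real Filter Set

-- quadratic Lyapunov derivative bound
lemma quad_bound (σ η β : ℝ) (hσ : 0 < σ) (hη : 0 < η) (hβ : β < 0)
    {r c : ℝ} (hr : 0 < r) (hc : 0 < c)
    (hr1 : 4 * r ≤ σ - β) (hr2 : 4 * r ≤ -β)
    (hc1 : c ≤ σ - β) (hc2 : 2 * c ≤ η * β ^ 2)
    (a b : ℝ) (hab : a ^ 2 + b ^ 2 < r ^ 2) :
    2 * a * (-a * (a - b + σ - β)) + 2 * b * (-η * b * (b - a + β) ^ 2)
      + c * (a ^ 2 + b ^ 2) ≤ 0 := by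
  have ha2 : a ^ 2 < r ^ 2 := by nlinarith [sq_nonneg b]
  have hb2 : b ^ 2 < r ^ 2 := by nlinarith [sq_nonneg a]
  have ha : -r < a ∧ a < r := by constructor <;> nlinarith
  have hb : -r < b ∧ b < r := by constructor <;> nlinarith
  have h5 : (σ - β) / 2 ≤ a - b + σ - β := by nlinarith [ha.1, hb.2]
  have h2 : b - a + β ≤ β / 2 := by nlinarith [hb.2, ha.1]
  have h3 : (β / 2) ^ 2 ≤ (b - a + β) ^ 2 := by nlinarith
  have h4 : η * b ^ 2 * (β / 2) ^ 2 ≤ η * b ^ 2 * (b - a + β) ^ 2 :=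
    mul_le_mul_of_nonneg_left h3 (by positivity)
  nlinarith [mul_le_mul_of_nonneg_left h5 (sq_nonneg a), sq_nonneg a, sq_nonneg b]

lemma key_decay (σ η β : ℝ) (hσ : 0 < σ) (hη : 0 < η) (hβ : β < 0)
    {r c : ℝ} (hr : 0 < r) (hc : 0 < c)
    (hr1 : 4 * r ≤ σ - β) (hr2 : 4 * r ≤ -β)
    (hc1 : c ≤ σ - β) (hc2 : 2 * c ≤ η * β ^ 2)
    (u v : ℝ → ℝ)
    (hu : ∀ t : ℝ, HasDerivAt u (-u t * (u t - v t + σ - β)) t)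
    (hv : ∀ t : ℝ, HasDerivAt v (-η * v t * (v t - u t + β) ^ 2) t)
    (h0 : (u 0) ^ 2 + (v 0) ^ 2 < r ^ 2) :
    ∀ t ≥ (0 : ℝ), (u t) ^ 2 + (v t) ^ 2
      ≤ ((u 0) ^ 2 + (v 0) ^ 2) * Real.exp (-(c * t)) := by
  set V : ℝ → ℝ := fun t => u t ^ 2 + v t ^ 2 with hVdef
  set g : ℝ → ℝ := fun t => V t * Real.exp (c * t) - V 0 with hgdef
  have hV : ∀ t, HasDerivAt V
      (2 * u t * (-u t * (u t - v t + σ - β)) + 2 * v t * (-η * v t * (v t - u t + β) ^ 2)) t := by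
    intro t
    have h1 := ((hu t).pow 2).add ((hv t).pow 2)
    refine h1.congr_deriv ?_
    push_cast
    ring
  have hE : ∀ t, HasDerivAt (fun t => Real.exp (c * t)) (Real.exp (c * t) * c) t := by
    intro t
    have := ((hasDerivAt_id t).const_mul c).exp
    simpa using this
  have hgd : ∀ t, HasDerivAt g
      (Real.exp (c * t) * ((2 * u t * (-u t * (u t - v t + σ - β))
        + 2 * v t * (-η * v t * (v t - u t + β) ^ 2)) + c * V t)) t := by
    intro t
    have := ((hV t).mul (hE t)).sub_const (V 0)
    refine this.congr_deriv ?_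
    ring
  have hgc : Continuous g := by
    have : Differentiable ℝ g := fun t => (hgd t).differentiableAt
    exact this.continuous
  have hVc : Continuous V := by
    have : Differentiable ℝ V := fun t => (hV t).differentiableAt
    exact this.continuous
  have hderiv_le : ∀ s, V s < r ^ 2 → deriv g s ≤ 0 := by
    intro s hs
    rw [(hgd s).deriv]
    have hq := quad_bound σ η β hσ hη hβ hr hc hr1 hr2 hc1 hc2 (u s) (v s) hs
    have he : (0 : ℝ) ≤ Real.exp (c * s) := (Real.exp_pos _).le
    exact mul_nonpos_of_nonneg_of_nonpos he hq
  have hg0 : g 0 = 0 := by simp [hgdef]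
  have key2 : ∀ t ≥ (0 : ℝ), g t ≤ 0 := by
    by_contra hcon
    push_neg at hcon
    obtain ⟨t1, ht1, hgt1⟩ := hcon
    set B : Set ℝ := {t : ℝ | 0 ≤ t ∧ 0 < g t} with hBdef
    have hBne : B.Nonempty := ⟨t1, ht1, hgt1⟩
    have hBbd : BddBelow B := ⟨0, fun x hx => hx.1⟩
    set t0 := sInf B with ht0def
    have ht0 : 0 ≤ t0 := le_csInf hBne fun x hx => hx.1
    have hle : ∀ s, 0 ≤ s → s < t0 → g s ≤ 0 := by
      intro s hs hst
      by_contra h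
      push_neg at h
      exact absurd (csInf_le hBbd ⟨hs, h⟩) (not_le.mpr hst)
    have hgt0 : g t0 ≤ 0 := by
      rcases eq_or_lt_of_le ht0 with h | h
      · rw [← h, hg0]
      · have htd : Filter.Tendsto g (nhdsWithin t0 (Set.Iio t0)) (nhds (g t0)) :=
          (hgc.continuousAt (x := t0)).continuousWithinAt.tendsto
        refine le_of_tendsto htd ?_
        filter_upwards [eventually_nhdsWithin_of_eventually_nhds (eventually_gt_nhds h),
          self_mem_nhdsWithin] with s hs1 hs2
        exact hle s hs1.le hs2
    have hVt0 : V t0 < r ^ 2 := by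
      have he1 : (1 : ℝ) ≤ Real.exp (c * t0) := Real.one_le_exp (by positivity)
      have hVnn : (0 : ℝ) ≤ V t0 := by simp only [hVdef]; positivity
      have h2 : V t0 * Real.exp (c * t0) ≤ V 0 := by
        have h3 := hgt0
        simp only [hgdef] at h3
        linarith
      have h0' : V 0 < r ^ 2 := h0
      nlinarith
    have hev : ∀ᶠ s in nhds t0, V s < r ^ 2 :=
      Filter.Tendsto.eventually_lt_const hVt0 (hVc.tendsto t0)
    obtain ⟨ρ, hρ, hball⟩ := Metric.eventually_nhds_iff.mp hev
    have hanti : AntitoneOn g (Set.Icc t0 (t0 + ρ / 2)) := by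
      apply antitoneOn_of_deriv_nonpos (convex_Icc _ _) hgc.continuousOn
      · intro s hs
        exact (hgd s).differentiableAt.differentiableWithinAt
      · intro s hs
        rw [interior_Icc] at hs
        apply hderiv_le
        apply hball
        rw [Real.dist_eq, abs_lt]
        constructor <;> [linarith [hs.1]; linarith [hs.2]]
    obtain ⟨b, hbB, hblt⟩ := Real.lt_sInf_add_pos hBne (by positivity : (0:ℝ) < ρ / 2)
    have hbt0 : t0 ≤ b := csInf_le hBbd hbB
    have : g b ≤ g t0 :=
      hanti (Set.left_mem_Icc.mpr (by linarith)) ⟨hbt0, by linarith⟩ hbt0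
    linarith [hbB.2]
  intro t ht
  have hgle := key2 t ht
  have h1 : V t * Real.exp (c * t) ≤ V 0 := by
    simp only [hgdef] at hgle; linarith
  have he : (0 : ℝ) < Real.exp (c * t) := Real.exp_pos _
  show V t ≤ V 0 * Real.exp (-(c * t))
  rw [Real.exp_neg, ← div_eq_mul_inv, le_div_iff₀ he]
  exact h1

set_option maxHeartbeats 1000000 in
/-- Local asymptotic stability of the origin for the reduced planar reaction system:
(i) Lyapunov stability and (ii) local attractivity. -/
theorem stmt8 (σ η β : ℝ) (hσ : 0 < σ) (hη : 0 < η) (hβ : β < 0) :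
    (∀ ε > (0 : ℝ), ∃ δ > (0 : ℝ), ∀ u v : ℝ → ℝ,
      (∀ t : ℝ, HasDerivAt u (-u t * (u t - v t + σ - β)) t) →
      (∀ t : ℝ, HasDerivAt v (-η * v t * (v t - u t + β) ^ 2) t) →
      (u 0) ^ 2 + (v 0) ^ 2 < δ ^ 2 →
      ∀ t ≥ (0 : ℝ), (u t) ^ 2 + (v t) ^ 2 < ε ^ 2) ∧
    (∃ δ₀ > (0 : ℝ), ∀ u v : ℝ → ℝ,
      (∀ t : ℝ, HasDerivAt u (-u t * (u t - v t + σ - β)) t) →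
      (∀ t : ℝ, HasDerivAt v (-η * v t * (v t - u t + β) ^ 2) t) →
      (u 0) ^ 2 + (v 0) ^ 2 < δ₀ ^ 2 →
      Filter.Tendsto (fun t : ℝ => (u t, v t)) Filter.atTop (nhds ((0 : ℝ), (0 : ℝ)))) := by
  have key_decay : ∀ {r c : ℝ}, 0 < r → 0 < c → 4 * r ≤ σ - β → 4 * r ≤ -β →
      c ≤ σ - β → 2 * c ≤ η * β ^ 2 → ∀ (u v : ℝ → ℝ),
      (∀ t : ℝ, HasDerivAt u (-u t * (u t - v t + σ - β)) t) →
      (∀ t : ℝ, HasDerivAt v (-η * v t * (v t - u t + β) ^ 2) t) →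
      (u 0) ^ 2 + (v 0) ^ 2 < r ^ 2 →
      ∀ t ≥ (0 : ℝ), (u t) ^ 2 + (v t) ^ 2 ≤ ((u 0) ^ 2 + (v 0) ^ 2) * Real.exp (-(c * t)) :=
    fun hr hc hr1 hr2 hc1 hc2 u v hu hv h0 =>
      key_decay σ η β hσ hη hβ hr hc hr1 hr2 hc1 hc2 u v hu hv h0
  have hσβ : 0 < σ - β := by linarith
  set r : ℝ := min ((σ - β) / 4) ((-β) / 4) with hrdef
  set c : ℝ := min (σ - β) (η * β ^ 2 / 2) with hcdef
  have hr : 0 < r := lt_min (by linarith) (by linarith)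
  have hβ2 : 0 < η * β ^ 2 / 2 := by
    have h1 : 0 < β ^ 2 := by nlinarith
    have h2 := mul_pos hη h1
    linarith
  have hc : 0 < c := lt_min hσβ hβ2
  have hr1 : 4 * r ≤ σ - β := by
    have := min_le_left ((σ - β) / 4) ((-β) / 4); linarith
  have hr2 : 4 * r ≤ -β := by
    have := min_le_right ((σ - β) / 4) ((-β) / 4); linarith
  have hc1 : c ≤ σ - β := min_le_left _ _
  have hc2 : 2 * c ≤ η * β ^ 2 := by
    have := min_le_right (σ - β) (η * β ^ 2 / 2); linarith
  constructor
  · intro ε hε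
    refine ⟨min ε r, lt_min hε hr, ?_⟩
    intro u v hu hv h0
    have hδr : min ε r ≤ r := min_le_right _ _
    have hδε : min ε r ≤ ε := min_le_left _ _
    have h0' : (u 0) ^ 2 + (v 0) ^ 2 < r ^ 2 := by
      calc (u 0) ^ 2 + (v 0) ^ 2 < (min ε r) ^ 2 := h0
      _ ≤ r ^ 2 := by nlinarith [lt_min hε hr]
    intro t ht
    have hkey := key_decay hr hc hr1 hr2 hc1 hc2 u v hu hv h0' t ht
    have he1 : Real.exp (-(c * t)) ≤ 1 := Real.exp_le_one_iff.mpr (by nlinarith)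
    have hVnn : (0 : ℝ) ≤ (u 0) ^ 2 + (v 0) ^ 2 := by positivity
    have : (u t) ^ 2 + (v t) ^ 2 ≤ (u 0) ^ 2 + (v 0) ^ 2 := by nlinarith
    calc (u t) ^ 2 + (v t) ^ 2 ≤ (u 0) ^ 2 + (v 0) ^ 2 := this
    _ < (min ε r) ^ 2 := h0
    _ ≤ ε ^ 2 := by nlinarith [lt_min hε hr]
  · refine ⟨r, hr, ?_⟩
    intro u v hu hv h0
    have hkey := key_decay hr hc hr1 hr2 hc1 hc2 u v hu hv h0
    have hVnn : (0 : ℝ) ≤ (u 0) ^ 2 + (v 0) ^ 2 := by positivity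
    have htend : Tendsto (fun t : ℝ => ((u 0) ^ 2 + (v 0) ^ 2) * Real.exp (-(c * t)))
        atTop (nhds 0) := by
      have h1 : Tendsto (fun t : ℝ => -(c * t)) atTop atBot := by
        apply tendsto_neg_atBot_iff.mpr
        exact Tendsto.const_mul_atTop hc tendsto_id
      have h2 : Tendsto (fun t : ℝ => Real.exp (-(c * t))) atTop (nhds 0) :=
        Real.tendsto_exp_atBot.comp h1
      simpa using h2.const_mul ((u 0) ^ 2 + (v 0) ^ 2)
    have hsq : ∀ w : ℝ → ℝ,
        (∀ t ≥ (0:ℝ), w t ^ 2 ≤ ((u 0) ^ 2 + (v 0) ^ 2) * Real.exp (-(c * t))) →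
        Tendsto w atTop (nhds 0) := by
      intro w hw
      have hw2 : Tendsto (fun t => w t ^ 2) atTop (nhds 0) := by
        apply tendsto_of_tendsto_of_tendsto_of_le_of_le' tendsto_const_nhds htend
        · filter_upwards with t using sq_nonneg _
        · filter_upwards [eventually_ge_atTop (0:ℝ)] with t ht using hw t ht
      have habs : Tendsto (fun t => |w t|) atTop (nhds 0) := by
        have := (Real.continuous_sqrt.tendsto 0).comp hw2
        simpa [Function.comp_def, Real.sqrt_sq_eq_abs] using this
      exact (tendsto_zero_iff_abs_tendsto_zero w).mpr habs
    have hu0 : Tendsto u atTop (nhds 0) := by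
      apply hsq u
      intro t ht
      have := hkey t ht
      nlinarith [sq_nonneg (v t)]
    have hv0 : Tendsto v atTop (nhds 0) := by
      apply hsq v
      intro t ht
      have := hkey t ht
      nlinarith [sq_nonneg (u t)]
    exact hu0.prodMk_nhds hv0
end

section
/- Let σ > 0, η > 0 and β < 0, and let u, v : ℝ → ℝ be differentiable functions solving the reduced planar reaction system for all t, with u(0) ≥ 0 and v(0) ≥ 0. Then for all t ≥ 0 one has u(t) ≥ 0 and v(t) ≥ 0, and moreover v is nonincreasing on [0, ∞). -/
lemma sign_preserved (f g : ℝ → ℝ) (hg : Continuous g)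
    (hf : ∀ t, HasDerivAt f (f t * g t) t) (h0 : 0 ≤ f 0) : ∀ t, 0 ≤ f t := by
  intro t
  set G : ℝ → ℝ := fun t => ∫ s in (0:ℝ)..t, g s with hGdef
  have hG : ∀ x, HasDerivAt G (g x) x := fun x =>
    intervalIntegral.integral_hasDerivAt_right (hg.intervalIntegrable 0 x)
      (hg.stronglyMeasurableAtFilter _ _) hg.continuousAt
  set w : ℝ → ℝ := fun x => f x * Real.exp (-G x) with hwdef
  have hw : ∀ x, HasDerivAt w 0 x := by
    intro x
    have h1 : HasDerivAt (fun y => Real.exp (-G y)) (Real.exp (-G x) * (-g x)) x :=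
      ((hG x).neg).exp
    have : HasDerivAt (fun y => f y * Real.exp (-G y)) _ x := (hf x).mul h1
    convert this using 1
    ring
  have hconst : ∀ x : ℝ, w x = w 0 := fun x =>
    is_const_of_deriv_eq_zero (fun y => (hw y).differentiableAt) (fun y => (hw y).deriv) x 0
  have h := hconst t
  have he := Real.exp_pos (-G t)
  have he0 := Real.exp_pos (-G 0)
  have h0' : 0 ≤ w 0 := mul_nonneg h0 he0.le
  have hmul : 0 ≤ f t * Real.exp (-G t) := le_of_le_of_eq h0' h.symm
  by_contra hneg
  push_neg at hneg
  nlinarith [mul_neg_of_neg_of_pos hneg he]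

/-- Forward invariance of the nonnegative quadrant for the reduced planar reaction system,
together with monotonicity: `v` is nonincreasing on `[0, ∞)`. -/
theorem stmt9 (σ η β : ℝ) (hσ : 0 < σ) (hη : 0 < η) (hβ : β < 0)
    (u v : ℝ → ℝ)
    (hu : ∀ t : ℝ, HasDerivAt u (-u t * (u t - v t + σ - β)) t)
    (hv : ∀ t : ℝ, HasDerivAt v (-η * v t * (v t - u t + β) ^ 2) t)
    (hu0 : 0 ≤ u 0) (hv0 : 0 ≤ v 0) :
    (∀ t ≥ (0 : ℝ), 0 ≤ u t ∧ 0 ≤ v t) ∧ AntitoneOn v (Set.Ici (0 : ℝ)) := by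
  have hucont : Continuous u := continuous_iff_continuousAt.2 fun x => (hu x).differentiableAt.continuousAt
  have hvcont : Continuous v := continuous_iff_continuousAt.2 fun x => (hv x).differentiableAt.continuousAt
  have hgu : Continuous (fun s => -(u s - v s + σ - β)) := by continuity
  have hgv : Continuous (fun s => -η * (v s - u s + β) ^ 2) := by continuity
  have hunn : ∀ t, 0 ≤ u t := by
    apply sign_preserved u _ hgu _ hu0
    intro t
    convert hu t using 1
    ring
  have hvnn : ∀ t, 0 ≤ v t := by
    apply sign_preserved v _ hgv _ hv0
    intro t
    convert hv t using 1
    ring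
  refine ⟨fun t _ => ⟨hunn t, hvnn t⟩, ?_⟩
  apply antitoneOn_of_deriv_nonpos (convex_Ici 0) hvcont.continuousOn
    (fun x _ => (hv x).differentiableAt.differentiableWithinAt)
  intro x _
  rw [(hv x).deriv]
  have := hvnn x
  nlinarith [mul_nonneg (mul_nonneg hη.le this) (sq_nonneg (v x - u x + β))]
end

section
/- Let p be a prime, μ the Haar measure on (ℚ_p, +) with μ(ℤ_p) = 1, and α > 0 a real number. Then the function y ↦ ‖y‖^{-(α+1)} is integrable on the set {y ∈ ℚ_p : ‖y‖ > 1} and ∫_{{‖y‖ > 1}} ‖y‖^{-(α+1)} dμ(y) = (1 - p⁻¹) p^{-α} / (1 - p^{-α}). -/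
open MeasureTheory

section aux
variable {p : ℕ} [hp : Fact p.Prime] [MeasurableSpace ℚ_[p]] [BorelSpace ℚ_[p]]

private lemma ball_meas (r : ℝ) :
    MeasurableSet {y : ℚ_[p] | ‖y‖ ≤ r} :=
  (isClosed_le continuous_norm continuous_const).measurableSet


private lemma rpow_pow_comm {x : ℝ} (hx : 0 ≤ x) (β : ℝ) (m : ℕ) :
    (x ^ m) ^ β = (x ^ β) ^ m := by
  rw [← Real.rpow_natCast x m, ← Real.rpow_mul hx, mul_comm, Real.rpow_mul hx, Real.rpow_natCast]

private lemma ball_step (μ : Measure ℚ_[p]) [μ.IsAddHaarMeasure] (n : ℕ) :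
    μ {y : ℚ_[p] | ‖y‖ ≤ (p : ℝ) ^ (n + 1)} = p * μ {y : ℚ_[p] | ‖y‖ ≤ (p : ℝ) ^ n} := by
  have hp1 : 1 < (p : ℝ) := by exact_mod_cast hp.out.one_lt
  have hp0 : (0 : ℝ) < p := lt_trans one_pos hp1
  set c : ℚ_[p] := (p : ℚ_[p]) ^ (-(n + 1 : ℤ)) with hc
  have hcn : ‖c‖ = (p : ℝ) ^ ((n + 1 : ℕ) : ℤ) := by
    rw [hc, Padic.norm_p_zpow, neg_neg]; push_cast; ring_nf
  have hc0 : c ≠ 0 := by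
    intro h; rw [h, norm_zero] at hcn
    exact absurd hcn.symm (ne_of_gt (zpow_pos hp0 _))
  -- the union decomposition
  have hset : {y : ℚ_[p] | ‖y‖ ≤ (p : ℝ) ^ (n + 1)} =
      ⋃ k : Fin p, (fun y => -((k : ℚ_[p]) * c) + y) ⁻¹' {y : ℚ_[p] | ‖y‖ ≤ (p : ℝ) ^ n} := by
    ext y
    simp only [Set.mem_setOf_eq, Set.mem_iUnion, Set.mem_preimage, neg_add_eq_sub]
    constructor
    · intro hy
      have hz : ‖y / c‖ ≤ 1 := by
        rw [norm_div, hcn, div_le_one (by positivity)]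
        calc ‖y‖ ≤ (p : ℝ) ^ (n + 1) := hy
        _ = (p : ℝ) ^ ((n + 1 : ℕ) : ℤ) := by rw [zpow_natCast]
      set w : ℤ_[p] := ⟨y / c, hz⟩ with hw
      have hklt : w.appr 1 < p := by simpa using w.appr_lt 1
      refine ⟨⟨w.appr 1, hklt⟩, ?_⟩
      have hspec : ‖w - (w.appr 1 : ℤ_[p])‖ ≤ (p : ℝ) ^ (-(1 : ℕ) : ℤ) := by
        rw [PadicInt.norm_le_pow_iff_mem_span_pow]
        simpa using w.appr_spec 1
      have hyw : y = (w : ℚ_[p]) * c := by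
        show y = y / c * c
        rw [div_mul_cancel₀ y hc0]
    -- ‖y - k c‖ = ‖w - k‖ * ‖c‖
      have : y - ((w.appr 1 : ℕ) : ℚ_[p]) * c = ((w - (w.appr 1 : ℤ_[p]) : ℤ_[p]) : ℚ_[p]) * c := by
        rw [PadicInt.coe_sub, PadicInt.coe_natCast, sub_mul, ← hyw]
      rw [show ((⟨w.appr 1, hklt⟩ : Fin p) : ℚ_[p]) = ((w.appr 1 : ℕ) : ℚ_[p]) by norm_cast]
      rw [this, norm_mul, hcn, ← PadicInt.norm_def]
      calc ‖w - (w.appr 1 : ℤ_[p])‖ * (p : ℝ) ^ ((n + 1 : ℕ) : ℤ)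
          ≤ (p : ℝ) ^ (-(1 : ℕ) : ℤ) * (p : ℝ) ^ ((n + 1 : ℕ) : ℤ) := by
            apply mul_le_mul_of_nonneg_right hspec (by positivity)
        _ = (p : ℝ) ^ n := by
            rw [← zpow_add₀ (ne_of_gt hp0),
              show (-(1 : ℕ) : ℤ) + ((n + 1 : ℕ) : ℤ) = (n : ℤ) by push_cast; ring, zpow_natCast]
    · rintro ⟨k, hk⟩
      have h1 : ‖(k : ℚ_[p]) * c‖ ≤ (p : ℝ) ^ (n + 1) := by
        rw [norm_mul, hcn]
        have : ‖((k : ℕ) : ℚ_[p])‖ ≤ 1 := by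
          have := Padic.norm_int_le_one (p := p) (k : ℕ)
          simpa using this
        calc ‖((k : ℕ) : ℚ_[p])‖ * (p : ℝ) ^ ((n + 1 : ℕ) : ℤ)
            ≤ 1 * (p : ℝ) ^ ((n + 1 : ℕ) : ℤ) := by
              apply mul_le_mul_of_nonneg_right this (by positivity)
          _ = (p : ℝ) ^ (n + 1) := by rw [one_mul, zpow_natCast]
      have := IsUltrametricDist.norm_add_le_max (y - (k : ℚ_[p]) * c) ((k : ℚ_[p]) * c)
      rw [sub_add_cancel] at this
      refine le_trans this (max_le (le_trans hk ?_) h1)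
      exact pow_le_pow_right₀ (le_of_lt hp1) (Nat.le_succ n)
  -- disjointness
  have hdisj : Pairwise (Function.onFun Disjoint
      (fun k : Fin p => (fun y => -((k : ℚ_[p]) * c) + y) ⁻¹' {y : ℚ_[p] | ‖y‖ ≤ (p : ℝ) ^ n})) := by
    intro k j hkj
    rw [Function.onFun, Set.disjoint_left]
    intro y hky hjy
    simp only [Set.mem_preimage, Set.mem_setOf_eq, neg_add_eq_sub] at hky hjy
    have hsub : ‖((k : ℚ_[p]) - (j : ℚ_[p])) * c‖ ≤ (p : ℝ) ^ n := by
      have : ((k : ℚ_[p]) - (j : ℚ_[p])) * c = (y - (j : ℚ_[p]) * c) - (y - (k : ℚ_[p]) * c) := by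
        ring
      rw [this]
      rw [sub_eq_add_neg]
      refine le_trans (IsUltrametricDist.norm_add_le_max _ _) ?_
      rw [norm_neg]
      exact max_le hjy hky
    rw [norm_mul, hcn] at hsub
    have hlt : ‖(k : ℚ_[p]) - (j : ℚ_[p])‖ < 1 := by
      have hppos : (0 : ℝ) < (p : ℝ) ^ ((n + 1 : ℕ) : ℤ) := by positivity
      rw [← le_div_iff₀ hppos] at hsub
      apply lt_of_le_of_lt hsub
      rw [div_lt_one hppos]
      have : ((n : ℤ)) < ((n + 1 : ℕ) : ℤ) := by push_cast; omega
      calc (p : ℝ) ^ n = (p : ℝ) ^ (n : ℤ) := by rw [zpow_natCast]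
        _ < (p : ℝ) ^ ((n + 1 : ℕ) : ℤ) := by
            exact zpow_lt_zpow_right₀ hp1 this
    have hdvd : (p : ℤ) ∣ ((k : ℤ) - (j : ℤ)) := by
      rw [← Padic.norm_intCast_lt_one_iff]
      push_cast
      push_cast at hlt
      exact hlt
    have habs : |((k : ℤ) - (j : ℤ))| < p := by
      have hk' := k.isLt; have hj' := j.isLt
      rw [abs_lt]; omega
    have := Int.eq_zero_of_abs_lt_dvd hdvd habs
    apply hkj
    have : (k : ℤ) = (j : ℤ) := by omega
    exact Fin.ext (by exact_mod_cast this)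
  rw [hset, measure_iUnion hdisj (fun k => (ball_meas _).preimage (measurable_const_add _))]
  simp only [measure_preimage_add]
  rw [tsum_fintype]
  simp [Finset.sum_const, nsmul_eq_mul]

private lemma ball_measure (μ : Measure ℚ_[p]) [μ.IsAddHaarMeasure]
    (hμ : μ {x : ℚ_[p] | ‖x‖ ≤ 1} = 1) (n : ℕ) :
    μ {y : ℚ_[p] | ‖y‖ ≤ (p : ℝ) ^ n} = (p : ENNReal) ^ n := by
  induction n with
  | zero => simpa using hμ
  | succ n ih => rw [ball_step μ n, ih, pow_succ]; ring

end aux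

/-- For the Haar measure on `(ℚ_p, +)` with `μ(ℤ_p) = 1` and `α > 0`, the function
`y ↦ ‖y‖^{-(α+1)}` is integrable on `{‖y‖ > 1}` and its integral equals
`(1 - p⁻¹) p^{-α} / (1 - p^{-α})`. -/
theorem stmt15 (p : ℕ) [Fact p.Prime]
    [MeasurableSpace ℚ_[p]] [BorelSpace ℚ_[p]]
    (μ : Measure ℚ_[p]) [μ.IsAddHaarMeasure]
    (hμ : μ {x : ℚ_[p] | ‖x‖ ≤ 1} = 1) (α : ℝ) (hα : 0 < α) :
    IntegrableOn (fun y : ℚ_[p] => ‖y‖ ^ (-(α + 1))) {y : ℚ_[p] | 1 < ‖y‖} μ ∧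
    ∫ y in {y : ℚ_[p] | 1 < ‖y‖}, ‖y‖ ^ (-(α + 1)) ∂μ =
      (1 - (p : ℝ)⁻¹) * (p : ℝ) ^ (-α) / (1 - (p : ℝ) ^ (-α)) := by
  have hp' : p.Prime := Fact.out
  have hp1 : 1 < (p : ℝ) := by exact_mod_cast hp'.one_lt
  have hp0 : (0 : ℝ) < p := lt_trans one_pos hp1
  set S : ℕ → Set ℚ_[p] := fun n => {y : ℚ_[p] | ‖y‖ = (p : ℝ) ^ (n + 1)} with hS
  set U : Set ℚ_[p] := {y : ℚ_[p] | 1 < ‖y‖} with hUdef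
  set r : ℝ := (p : ℝ) ^ (-α) with hr
  set C : ℝ := 1 - (p : ℝ)⁻¹ with hC
  set f : ℚ_[p] → ℝ := fun y => ‖y‖ ^ (-(α + 1)) with hf
  have hr0 : 0 < r := Real.rpow_pos_of_pos hp0 _
  have hr1 : r < 1 := Real.rpow_lt_one_of_one_lt_of_neg hp1 (neg_lt_zero.mpr hα)
  have hC0 : 0 ≤ C := by
    rw [hC, sub_nonneg, inv_le_one_iff₀]; right; exact hp1.le
  have hSdiff : ∀ n, S n =
      {y : ℚ_[p] | ‖y‖ ≤ (p : ℝ) ^ (n + 1)} \ {y : ℚ_[p] | ‖y‖ ≤ (p : ℝ) ^ n} := by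
    intro n; ext y
    simp only [hS, Set.mem_setOf_eq, Set.mem_diff, not_le]
    constructor
    · intro h
      exact ⟨le_of_eq h, h ▸ pow_lt_pow_right₀ hp1 (Nat.lt_succ_self n)⟩
    · rintro ⟨h1, h2⟩
      have hy0 : y ≠ 0 := by
        intro h; rw [h, norm_zero] at h2
        exact absurd h2 (not_lt.mpr (by positivity))
      rw [Padic.norm_eq_zpow_neg_valuation hy0] at h1 h2 ⊢
      have e1 : (n : ℤ) < -y.valuation := by
        rwa [← zpow_natCast (p : ℝ) n, zpow_lt_zpow_iff_right₀ hp1] at h2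
      have e2 : -y.valuation ≤ ((n + 1 : ℕ) : ℤ) := by
        rwa [← zpow_natCast (p : ℝ) (n + 1), zpow_le_zpow_iff_right₀ hp1] at h1
      have e3 : -y.valuation = ((n + 1 : ℕ) : ℤ) := by push_cast at e2 ⊢; omega
      rw [e3, zpow_natCast]
  have hSm : ∀ n, MeasurableSet (S n) := fun n => by
    rw [hSdiff n]; exact (ball_meas _).diff (ball_meas _)
  have hU : U = ⋃ n, S n := by
    ext y
    simp only [hUdef, hS, Set.mem_setOf_eq, Set.mem_iUnion]
    constructor
    · intro hy
      have hy0 : y ≠ 0 := by intro h; rw [h, norm_zero] at hy; linarith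
      rw [Padic.norm_eq_zpow_neg_valuation hy0] at hy ⊢
      refine ⟨(-y.valuation - 1).toNat, ?_⟩
      rw [← zpow_natCast (p : ℝ)]
      congr 1
      have : (0 : ℤ) < -y.valuation := by
        rwa [← zpow_zero (p : ℝ), zpow_lt_zpow_iff_right₀ hp1] at hy
      push_cast
      omega
    · rintro ⟨n, hn⟩
      rw [hn]
      exact one_lt_pow₀ hp1 (Nat.succ_ne_zero n)
  have hUm : MeasurableSet U := (isOpen_lt continuous_const continuous_norm).measurableSet
  have hdS : Pairwise (Function.onFun Disjoint S) := by
    intro n m hnm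
    rw [Function.onFun, Set.disjoint_left]
    intro y hy1 hy2
    simp only [hS, Set.mem_setOf_eq] at hy1 hy2
    have := pow_right_injective₀ hp0 (ne_of_gt hp1) (hy1.symm.trans hy2)
    omega
  have hball := ball_measure μ hμ
  have hfin : ∀ n : ℕ, μ {y : ℚ_[p] | ‖y‖ ≤ (p : ℝ) ^ n} ≠ ⊤ := fun n => by
    rw [hball n]; exact ENNReal.pow_ne_top (ENNReal.natCast_ne_top p)
  have hsub : ∀ n : ℕ, {y : ℚ_[p] | ‖y‖ ≤ (p : ℝ) ^ n} ⊆ {y : ℚ_[p] | ‖y‖ ≤ (p : ℝ) ^ (n + 1)} :=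
    fun n y hy => le_trans hy (pow_le_pow_right₀ hp1.le (Nat.le_succ n))
  have hSμ : ∀ n, μ (S n) = ENNReal.ofReal ((p : ℝ) ^ (n + 1) - (p : ℝ) ^ n) := by
    intro n
    rw [hSdiff n, measure_diff (hsub n) (ball_meas _).nullMeasurableSet (hfin n), hball, hball,
      ENNReal.ofReal_sub _ (by positivity), ENNReal.ofReal_pow hp0.le, ENNReal.ofReal_pow hp0.le,
      ENNReal.ofReal_natCast]
  set c : ℕ → ℝ := fun n => ((p : ℝ) ^ (n + 1)) ^ (-(α + 1)) with hc
  have hcnn : ∀ n, 0 ≤ c n := fun n => Real.rpow_nonneg (by positivity) _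
  have hpr : (p : ℝ) ^ (-(α + 1)) * (p : ℝ) = r := by
    nth_rewrite 2 [← Real.rpow_one (p : ℝ)]
    rw [← Real.rpow_add hp0, hr]
    norm_num
  have hterm : ∀ n, c n * ((p : ℝ) ^ (n + 1) - (p : ℝ) ^ n) = C * r ^ (n + 1) := by
    intro n
    have hsplit : (p : ℝ) ^ (n + 1) - (p : ℝ) ^ n = (p : ℝ) ^ (n + 1) * C := by
      rw [hC, mul_sub, mul_one, pow_succ, mul_inv_cancel_right₀ (ne_of_gt hp0)]
    rw [hsplit, ← mul_assoc, hc]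
    show ((p : ℝ) ^ (n + 1)) ^ (-(α + 1)) * (p : ℝ) ^ (n + 1) * C = C * r ^ (n + 1)
    rw [rpow_pow_comm hp0.le, ← mul_pow, hpr, mul_comm]
  have hfS : ∀ n, ∀ y ∈ S n, f y = c n := by
    intro n y hy
    simp only [hS, Set.mem_setOf_eq] at hy
    rw [hf]; simp only []
    rw [hy]
  have hfnonneg : ∀ y, 0 ≤ f y := fun y => Real.rpow_nonneg (norm_nonneg y) _
  have haesm : AEStronglyMeasurable f (μ.restrict U) := by
    refine ContinuousOn.aestronglyMeasurable (fun y hy => ?_) hUm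
    have hy0 : ‖y‖ ≠ 0 := by
      rw [hUdef, Set.mem_setOf_eq] at hy; exact ne_of_gt (lt_trans one_pos hy)
    exact ((Real.continuousAt_rpow_const _ _ (Or.inl hy0)).comp continuous_norm.continuousAt
      ).continuousWithinAt
  have hs1 : (fun n : ℕ => C * r ^ (n + 1)) = fun n : ℕ => (C * r) * r ^ n := by
    funext n; rw [pow_succ]; ring
  have hsum : Summable (fun n : ℕ => C * r ^ (n + 1)) := by
    rw [hs1]; exact (summable_geometric_of_lt_one hr0.le hr1).mul_left _
  have htsum : ∑' n : ℕ, C * r ^ (n + 1) = C * r / (1 - r) := by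
    rw [hs1, tsum_mul_left, tsum_geometric_of_lt_one hr0.le hr1, div_eq_mul_inv, mul_assoc]
  have hlint : ∫⁻ a in U, ENNReal.ofReal ‖f a‖ ∂μ = ∑' n : ℕ, ENNReal.ofReal (C * r ^ (n + 1)) := by
    have h1 : ∀ a, ENNReal.ofReal ‖f a‖ = ENNReal.ofReal (f a) := fun a => by
      rw [Real.norm_of_nonneg (hfnonneg a)]
    simp_rw [h1]
    rw [hU, lintegral_iUnion hSm hdS]
    refine tsum_congr fun n => ?_
    rw [setLIntegral_congr_fun (hSm n)
        (fun y hy => by rw [hfS n y hy]),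
      setLIntegral_const, hSμ n, ← ENNReal.ofReal_mul (hcnn n), hterm n]
  have hFI : IntegrableOn f U μ := by
    refine ⟨haesm, ?_⟩
    rw [hasFiniteIntegral_iff_norm]
    rw [show (∫⁻ a, ENNReal.ofReal ‖f a‖ ∂μ.restrict U) = ∫⁻ a in U, ENNReal.ofReal ‖f a‖ ∂μ
        from rfl,
      hlint, ← ENNReal.ofReal_tsum_of_nonneg (fun n => by positivity) hsum]
    exact ENNReal.ofReal_lt_top
  refine ⟨hFI, ?_⟩
  have hint : ∫ y in U, f y ∂μ = ∑' n : ℕ, ∫ y in S n, f y ∂μ := by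
    rw [hU] at hFI ⊢
    exact integral_iUnion hSm hdS hFI
  rw [hint]
  have heach : ∀ n, ∫ y in S n, f y ∂μ = C * r ^ (n + 1) := by
    intro n
    rw [setIntegral_congr_fun (hSm n) (fun y hy => hfS n y hy), setIntegral_const, measureReal_def, hSμ n,
      ENNReal.toReal_ofReal (sub_nonneg.mpr (pow_le_pow_right₀ hp1.le (Nat.le_succ n))),
      smul_eq_mul, mul_comm, hterm n]
  rw [tsum_congr heach, htsum]
end

section
/- Let p be a prime, μ the Haar measure on (ℚ_p, +) with μ(ℤ_p) = 1, and α > 0 a real number. Let u : ℚ_p → ℝ be a bounded measurable function with u(y) = 0 whenever ‖y‖ > 1, and let x ∈ ℤ_p be such that y ↦ (u(y) - u(x)) ‖x - y‖^{-(α+1)} is integrable on ℤ_p. Then this function is integrable on ℚ_p and ((1 - p^α)/(1 - p^{-α-1})) ∫_{ℚ_p} (u(y) - u(x)) ‖x - y‖^{-(α+1)} dμ(y) = ((1 - p^α)/(1 - p^{-α-1})) ∫_{ℤ_p} (u(y) - u(x)) ‖x - y‖^{-(α+1)} dμ(y) + (p^α (p - 1)/(p^{α+1} - 1)) u(x). That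 is, the Vladimirov operator D^α restricted to functions supported in ℤ_p equals the corresponding integral operator over ℤ_p plus the constant μ_α = p^α (p - 1)/(p^{α+1} - 1) times the identity. -/
open MeasureTheory

lemma aux_alg (a b q v : ℝ) (ha : 1 < a) (hb : 1 < b) :
    (1 - a)/(1 - b⁻¹) * ((0 - v) * ((q - 1) * b⁻¹) * (1 - a⁻¹)⁻¹) = a * (q - 1)/(b - 1) * v := by
  have ha0 : a ≠ 0 := by linarith
  have hb0 : b ≠ 0 := by linarith
  have h1 : 1 - b⁻¹ ≠ 0 := by
    have : b⁻¹ < 1 := by rw [inv_lt_one_iff₀]; right; exact hb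
    linarith
  have h2 : 1 - a⁻¹ ≠ 0 := by
    have : a⁻¹ < 1 := by rw [inv_lt_one_iff₀]; right; exact ha
    linarith
  have h3 : b - 1 ≠ 0 := by linarith
  have e1 : (1 - a) * (1 - a⁻¹)⁻¹ = -a := by
    rw [mul_inv_eq_iff_eq_mul₀ h2]
    field_simp
    ring
  have e2 : b⁻¹ * (1 - b⁻¹)⁻¹ = (b - 1)⁻¹ := by
    rw [mul_inv_eq_iff_eq_mul₀ h1]
    field_simp
  calc (1 - a)/(1 - b⁻¹) * ((0 - v) * ((q - 1) * b⁻¹) * (1 - a⁻¹)⁻¹)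
      = ((1 - a) * (1 - a⁻¹)⁻¹) * ((0 - v) * (q - 1)) * (b⁻¹ * (1 - b⁻¹)⁻¹) := by
        rw [div_eq_mul_inv]; ring
    _ = (-a) * ((0 - v) * (q - 1)) * (b - 1)⁻¹ := by rw [e1, e2]
    _ = a * (q - 1)/(b - 1) * v := by rw [div_eq_mul_inv]; ring


variable {p : ℕ} [hp : Fact p.Prime]



lemma aux_residue (w : ℚ_[p]) (hw : ‖w‖ ≤ 1) :
    ∃ j : ℕ, j < p ∧ ‖w - (j : ℚ_[p])‖ ≤ (p : ℝ) ^ (-1 : ℤ) := by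
  set z : ℤ_[p] := ⟨w, hw⟩
  refine ⟨z.appr 1, by simpa using z.appr_lt 1, ?_⟩
  have h := (PadicInt.norm_le_pow_iff_mem_span_pow (z - (z.appr 1 : ℤ_[p])) 1).mpr
    (by simpa using z.appr_spec 1)
  simp only [PadicInt.norm_def, PadicInt.coe_sub, PadicInt.coe_natCast, Nat.cast_one] at h
  exact h

lemma aux_norm_natCast_sub {i j : ℕ} (hi : i < p) (hj : j < p) (hij : i ≠ j) :
    ‖((i : ℚ_[p]) - j)‖ = 1 := by
  have hcast : ((i : ℚ_[p]) - j) = ((i - j : ℤ) : ℚ_[p]) := by push_cast; ring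
  rw [hcast]
  have h1 : ‖((i - j : ℤ) : ℚ_[p])‖ ≤ 1 := Padic.norm_int_le_one _
  have h2 : ¬ ‖((i - j : ℤ) : ℚ_[p])‖ < 1 := by
    rw [Padic.norm_intCast_lt_one_iff]
    intro hdvd
    obtain ⟨k, hk⟩ := hdvd
    have hip : (i : ℤ) < p := by exact_mod_cast hi
    have hjp : (j : ℤ) < p := by exact_mod_cast hj
    have hne : (i : ℤ) ≠ j := by exact_mod_cast hij
    have hp0 : (0 : ℤ) < p := by exact_mod_cast hp.out.pos
    rcases lt_trichotomy k 0 with h | h | h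
    · nlinarith
    · subst h; simp at hk; omega
    · nlinarith
  linarith [lt_or_eq_of_le h1, norm_nonneg ((i - j : ℤ) : ℚ_[p])]

lemma aux_ball_decomp (m : ℕ) :
    {y : ℚ_[p] | ‖y‖ ≤ (p : ℝ) ^ (m + 1)} =
      ⋃ j : Fin p, {y : ℚ_[p] | ‖y - (j : ℚ_[p]) * (p : ℚ_[p]) ^ (-(m + 1) : ℤ)‖ ≤ (p : ℝ) ^ m} := by
  have hp1 : (1 : ℝ) < p := by exact_mod_cast hp.out.one_lt
  have hp0 : (0 : ℝ) < p := by positivity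
  have hppos : (p : ℚ_[p]) ≠ 0 := by exact_mod_cast hp.out.ne_zero
  ext y
  simp only [Set.mem_setOf_eq, Set.mem_iUnion]
  constructor
  · intro hy
    have hw : ‖y * (p : ℚ_[p]) ^ ((m + 1 : ℕ) : ℤ)‖ ≤ 1 := by
      rw [norm_mul, Padic.norm_p_zpow]
      calc ‖y‖ * (p : ℝ) ^ (-((m+1:ℕ) : ℤ)) ≤ (p:ℝ)^(m+1) * (p:ℝ)^(-((m+1:ℕ):ℤ)) := by
            apply mul_le_mul_of_nonneg_right hy (by positivity)
        _ = 1 := by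
            rw [← zpow_natCast (p:ℝ) (m+1), ← zpow_add₀ (ne_of_gt hp0)]
            push_cast
            rw [show ((m:ℤ) + 1 + -((m:ℤ)+1)) = 0 by ring, zpow_zero]
    obtain ⟨j, hjp, hj⟩ := aux_residue _ hw
    refine ⟨⟨j, hjp⟩, ?_⟩
    have key : y - (j : ℚ_[p]) * (p : ℚ_[p]) ^ (-(m + 1) : ℤ)
        = (y * (p : ℚ_[p]) ^ ((m + 1 : ℕ) : ℤ) - j) * (p : ℚ_[p]) ^ (-(m + 1) : ℤ) := by
      rw [sub_mul, mul_assoc, ← zpow_add₀ hppos]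
      push_cast
      rw [show ((m:ℤ) + 1 + -((m:ℤ)+1)) = 0 by ring, zpow_zero, mul_one]
    rw [key, norm_mul, Padic.norm_p_zpow, neg_neg]
    calc ‖y * (p : ℚ_[p]) ^ ((m + 1 : ℕ) : ℤ) - j‖ * (p:ℝ)^((m+1 : ℤ))
        ≤ (p:ℝ)^(-1 : ℤ) * (p:ℝ)^((m+1:ℤ)) := by
          apply mul_le_mul_of_nonneg_right hj (by positivity)
      _ = (p:ℝ)^(m : ℤ) := by
          rw [← zpow_add₀ (ne_of_gt hp0)]; ring_nf
      _ = (p:ℝ)^m := by exact_mod_cast zpow_natCast (p:ℝ) m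
  · rintro ⟨j, hj⟩
    have hcj : ‖(j : ℚ_[p]) * (p : ℚ_[p]) ^ (-(m + 1) : ℤ)‖ ≤ (p:ℝ) ^ (m+1) := by
      rw [norm_mul, Padic.norm_p_zpow, neg_neg]
      have h1 : ‖((j : ℕ) : ℚ_[p])‖ ≤ 1 := by
        have := Padic.norm_int_le_one (p := p) (j : ℤ)
        simpa using this
      calc ‖((j:ℕ) : ℚ_[p])‖ * (p:ℝ)^((m+1:ℤ)) ≤ 1 * (p:ℝ)^((m+1:ℤ)) := by
            apply mul_le_mul_of_nonneg_right h1 (by positivity)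
        _ = (p:ℝ)^(m+1) := by rw [one_mul]; exact_mod_cast zpow_natCast (p:ℝ) (m+1)
    have hsplit : y = (y - (j : ℚ_[p]) * (p : ℚ_[p]) ^ (-(m + 1) : ℤ)) + (j : ℚ_[p]) * (p : ℚ_[p]) ^ (-(m + 1) : ℤ) := by ring
    calc ‖y‖ = ‖(y - (j : ℚ_[p]) * (p : ℚ_[p]) ^ (-(m + 1) : ℤ)) + (j : ℚ_[p]) * (p : ℚ_[p]) ^ (-(m + 1) : ℤ)‖ := by rw [← hsplit]
      _ ≤ max ‖y - (j : ℚ_[p]) * (p : ℚ_[p]) ^ (-(m + 1) : ℤ)‖ ‖(j : ℚ_[p]) * (p : ℚ_[p]) ^ (-(m + 1) : ℤ)‖ := Padic.nonarchimedean _ _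
      _ ≤ (p:ℝ)^(m+1) := by
          apply max_le (le_trans hj ?_) hcj
          apply pow_le_pow_right₀ (le_of_lt hp1) (Nat.le_succ m)

lemma aux_ball_measure [MeasurableSpace ℚ_[p]] [BorelSpace ℚ_[p]]
    (μ : Measure ℚ_[p]) [μ.IsAddHaarMeasure]
    (hμ : μ {x : ℚ_[p] | ‖x‖ ≤ 1} = 1) (m : ℕ) :
    μ {y : ℚ_[p] | ‖y‖ ≤ (p : ℝ) ^ m} = (p : ENNReal) ^ m := by
  have hp1 : (1 : ℝ) < p := by exact_mod_cast hp.out.one_lt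
  induction m with
  | zero => simpa using hμ
  | succ m ih =>
    set c : Fin p → ℚ_[p] := fun j => ((j : ℕ) : ℚ_[p]) * (p : ℚ_[p]) ^ (-(m + 1) : ℤ) with hc
    set T : Fin p → Set ℚ_[p] := fun j => {y : ℚ_[p] | ‖y - c j‖ ≤ (p : ℝ) ^ m} with hT
    have hdec : {y : ℚ_[p] | ‖y‖ ≤ (p : ℝ) ^ (m + 1)} = ⋃ j : Fin p, T j := aux_ball_decomp m
    have hmeas : ∀ j : Fin p, MeasurableSet (T j) := fun j =>
      (isClosed_le (continuous_norm.comp (continuous_id.sub continuous_const)) continuous_const).measurableSet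
    have hdisj : Pairwise (Function.onFun Disjoint T) := by
      intro i j hij
      rw [Function.onFun, Set.disjoint_left]
      intro y hyi hyj
      have hnij : ‖c i - c j‖ = (p : ℝ) ^ (m + 1) := by
        have : c i - c j = (((i : ℕ) : ℚ_[p]) - ((j : ℕ) : ℚ_[p])) * (p : ℚ_[p]) ^ (-(m + 1) : ℤ) := by
          rw [hc]; ring
        rw [this, norm_mul, Padic.norm_p_zpow, neg_neg,
          aux_norm_natCast_sub i.isLt j.isLt (fun h => hij (Fin.ext h)), one_mul]
        exact_mod_cast zpow_natCast (p : ℝ) (m + 1)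
      have hle : ‖c i - c j‖ ≤ (p : ℝ) ^ m := by
        have hsplit : c i - c j = (y - c j) - (y - c i) := by ring
        rw [hsplit]
        calc ‖(y - c j) - (y - c i)‖ ≤ max ‖y - c j‖ ‖-(y - c i)‖ := by
              rw [sub_eq_add_neg]; exact Padic.nonarchimedean _ _
          _ ≤ (p : ℝ) ^ m := by rw [norm_neg]; exact max_le hyj hyi
      rw [hnij] at hle
      have : (p : ℝ) ^ (m + 1) > (p : ℝ) ^ m := pow_lt_pow_right₀ hp1 (Nat.lt_succ_self m)
      linarith
    have htrans : ∀ j : Fin p, μ (T j) = μ {y : ℚ_[p] | ‖y‖ ≤ (p : ℝ) ^ m} := by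
      intro j
      have hpre : T j = (fun y => (-(c j)) +ᵥ y) ⁻¹' {y : ℚ_[p] | ‖y‖ ≤ (p : ℝ) ^ m} := by
        ext y
        simp [hT, vadd_eq_add, neg_add_eq_sub]
      rw [hpre, measure_preimage_vadd]
    rw [hdec, measure_iUnion hdisj hmeas]
    simp only [htrans, ih, tsum_fintype, Finset.sum_const, Finset.card_univ, Fintype.card_fin]
    rw [nsmul_eq_mul, pow_succ, mul_comm]


lemma aux_shell_norm {k : ℕ} {y : ℚ_[p]}
    (h1 : ‖y‖ ≤ (p : ℝ) ^ (k + 1)) (h2 : ¬ ‖y‖ ≤ (p : ℝ) ^ k) :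
    ‖y‖ = (p : ℝ) ^ (k + 1) := by
  have hp1 : (1 : ℝ) < p := by exact_mod_cast hp.out.one_lt
  push_neg at h2
  have hy0 : y ≠ 0 := by
    intro h; rw [h, norm_zero] at h2
    have : (0:ℝ) < (p:ℝ)^k := by positivity
    linarith
  have hval := Padic.norm_eq_zpow_neg_valuation hy0
  rw [hval] at h1 h2 ⊢
  have hk1 : ((p:ℝ)^(k+1) : ℝ) = (p:ℝ) ^ ((k:ℤ)+1) := by
    rw [← zpow_natCast]; norm_num
  have hk : ((p:ℝ)^k : ℝ) = (p:ℝ) ^ (k:ℤ) := by rw [← zpow_natCast]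
  rw [hk1] at h1 ⊢
  rw [hk] at h2
  have e1 : -y.valuation ≤ (k:ℤ)+1 := by
    exact (zpow_le_zpow_iff_right₀ hp1).mp h1
  have e2 : (k:ℤ) < -y.valuation := by
    exact (zpow_lt_zpow_iff_right₀ hp1).mp h2
  have : -y.valuation = (k:ℤ)+1 := by omega
  rw [this]

lemma aux_shell_union :
    {y : ℚ_[p] | 1 < ‖y‖} =
      ⋃ k : ℕ, ({y : ℚ_[p] | ‖y‖ ≤ (p : ℝ) ^ (k + 1)} \ {y : ℚ_[p] | ‖y‖ ≤ (p : ℝ) ^ k}) := by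
  have hp1 : (1 : ℝ) < p := by exact_mod_cast hp.out.one_lt
  ext y
  simp only [Set.mem_setOf_eq, Set.mem_iUnion, Set.mem_diff]
  constructor
  · intro hy
    have hy0 : y ≠ 0 := by intro h; rw [h, norm_zero] at hy; linarith
    have hval := Padic.norm_eq_zpow_neg_valuation hy0
    have hv1 : 1 ≤ -y.valuation := by
      by_contra hcon
      push_neg at hcon
      have : -y.valuation ≤ 0 := by omega
      have : ‖y‖ ≤ 1 := by
        rw [hval, ← zpow_zero (p:ℝ)]
        exact zpow_le_zpow_right₀ (le_of_lt hp1) this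
      linarith
    refine ⟨(-y.valuation - 1).toNat, ?_, ?_⟩
    · rw [hval]
      have : ((((-y.valuation - 1).toNat : ℕ):ℤ) + 1) = -y.valuation := by omega
      calc (p:ℝ) ^ (-y.valuation) = (p:ℝ) ^ ((((-y.valuation - 1).toNat : ℕ):ℤ) + 1) := by rw [this]
        _ = (p:ℝ) ^ ((-y.valuation - 1).toNat + 1) := by
            rw [← zpow_natCast]; norm_num
        _ ≤ (p:ℝ) ^ ((-y.valuation - 1).toNat + 1) := le_rfl
    · rw [hval]
      intro hcon
      have hcon' : (p:ℝ) ^ (-y.valuation) ≤ (p:ℝ) ^ (((-y.valuation - 1).toNat : ℕ) : ℤ) := by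
        rwa [zpow_natCast]
      have := (zpow_le_zpow_iff_right₀ hp1).mp hcon'
      omega
  · rintro ⟨k, hk1, hk2⟩
    have := aux_shell_norm hk1 hk2
    rw [this]
    calc (1:ℝ) = 1^(k+1) := by norm_num
      _ < (p:ℝ)^(k+1) := by
          apply pow_lt_pow_left₀ hp1 (by norm_num) (by omega)


lemma aux_geom (α : ℝ) (k : ℕ) :
    ((p:ℝ)^(k+1) : ℝ) ^ (-(α+1)) * ((p:ℝ)^(k+1) - (p:ℝ)^k)
      = ((p:ℝ) - 1) * (p:ℝ) ^ (-(α+1)) * ((p:ℝ) ^ (-α)) ^ k := by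
  have hp1 : (1 : ℝ) < p := by exact_mod_cast hp.out.one_lt
  have hP : (0:ℝ) < p := by positivity
  have key : ((p:ℝ)^(k+1) : ℝ) ^ (-(α+1)) * (p:ℝ)^k
      = (p:ℝ) ^ (-(α+1)) * ((p:ℝ) ^ (-α)) ^ k := by
    rw [← Real.rpow_natCast ((p:ℝ) ^ (-α)) k, ← Real.rpow_natCast (p:ℝ) (k+1),
      ← Real.rpow_natCast (p:ℝ) k, ← Real.rpow_mul hP.le, ← Real.rpow_mul hP.le,
      ← Real.rpow_add hP, ← Real.rpow_add hP]
    congr 1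
    push_cast
    ring
  have hsplit : (p:ℝ)^(k+1) - (p:ℝ)^k = (p:ℝ)^k * ((p:ℝ) - 1) := by ring
  rw [hsplit, ← mul_assoc, key]
  ring

/-- The Vladimirov operator applied to a bounded measurable function supported in `ℤ_p`,
at a point `x ∈ ℤ_p`, equals the corresponding integral operator over `ℤ_p` plus the
constant `μ_α = p^α (p - 1)/(p^{α+1} - 1)` times `u(x)`. -/
theorem stmt16 (p : ℕ) [Fact p.Prime]
    [MeasurableSpace ℚ_[p]] [BorelSpace ℚ_[p]]
    (μ : Measure ℚ_[p]) [μ.IsAddHaarMeasure]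
    (hμ : μ {x : ℚ_[p] | ‖x‖ ≤ 1} = 1) (α : ℝ) (hα : 0 < α)
    (u : ℚ_[p] → ℝ) (humeas : Measurable u) (hubdd : ∃ C : ℝ, ∀ y : ℚ_[p], |u y| ≤ C)
    (husupp : ∀ y : ℚ_[p], 1 < ‖y‖ → u y = 0)
    (x : ℚ_[p]) (hx : ‖x‖ ≤ 1)
    (hint : IntegrableOn (fun y : ℚ_[p] => (u y - u x) * ‖x - y‖ ^ (-(α + 1)))
      {y : ℚ_[p] | ‖y‖ ≤ 1} μ) :
    Integrable (fun y : ℚ_[p] => (u y - u x) * ‖x - y‖ ^ (-(α + 1))) μ ∧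
    (1 - (p : ℝ) ^ α) / (1 - (p : ℝ) ^ (-(α + 1))) *
        ∫ y : ℚ_[p], (u y - u x) * ‖x - y‖ ^ (-(α + 1)) ∂μ =
      (1 - (p : ℝ) ^ α) / (1 - (p : ℝ) ^ (-(α + 1))) *
          ∫ y in {y : ℚ_[p] | ‖y‖ ≤ 1}, (u y - u x) * ‖x - y‖ ^ (-(α + 1)) ∂μ +
        (p : ℝ) ^ α * ((p : ℝ) - 1) / ((p : ℝ) ^ (α + 1) - 1) * u x := by
  have hp1 : (1 : ℝ) < p := by exact_mod_cast (Fact.out : p.Prime).one_lt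
  have hP : (0:ℝ) < p := by positivity
  set f : ℚ_[p] → ℝ := fun y => (u y - u x) * ‖x - y‖ ^ (-(α + 1)) with hf
  set B0 : Set ℚ_[p] := {y : ℚ_[p] | ‖y‖ ≤ 1} with hB0
  set S : ℕ → Set ℚ_[p] := fun k =>
    {y : ℚ_[p] | ‖y‖ ≤ (p : ℝ) ^ (k + 1)} \ {y : ℚ_[p] | ‖y‖ ≤ (p : ℝ) ^ k} with hS
  have hBmeas : ∀ m : ℕ, MeasurableSet {y : ℚ_[p] | ‖y‖ ≤ (p : ℝ) ^ m} := fun m =>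
    (isClosed_le continuous_norm continuous_const).measurableSet
  have hB0meas : MeasurableSet B0 :=
    (isClosed_le continuous_norm continuous_const).measurableSet
  have hSmeas : ∀ k, MeasurableSet (S k) := fun k => (hBmeas (k+1)).diff (hBmeas k)
  have hSnorm : ∀ k, ∀ y ∈ S k, ‖y‖ = (p:ℝ)^(k+1) := by
    intro k y hy
    exact aux_shell_norm hy.1 hy.2
  have hSone : ∀ k, ∀ y ∈ S k, 1 < ‖y‖ := by
    intro k y hy
    rw [hSnorm k y hy]
    calc (1:ℝ) = 1^(k+1) := by norm_num
      _ < (p:ℝ)^(k+1) := by apply pow_lt_pow_left₀ hp1 (by norm_num) (by omega)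
  set cst : ℕ → ℝ := fun k => (0 - u x) * ((p:ℝ)^(k+1) : ℝ) ^ (-(α+1)) with hcst
  have hconst : ∀ k, Set.EqOn f (fun _ => cst k) (S k) := by
    intro k y hy
    have h1 : 1 < ‖y‖ := hSone k y hy
    have hxy : ‖x - y‖ = ‖y‖ := by
      rw [sub_eq_add_neg,
        Padic.add_eq_max_of_ne (by rw [norm_neg]; intro h; rw [h] at hx; linarith),
        norm_neg, max_eq_right (by linarith)]
    simp only [hf, husupp y h1, hxy, hSnorm k y hy, hcst]
  -- shell measures
  have hμS : ∀ k, μ (S k) = (p : ENNReal)^(k+1) - (p : ENNReal)^k := by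
    intro k
    simp only [hS]
    have hsub : {y : ℚ_[p] | ‖y‖ ≤ (p:ℝ)^k} ⊆ {y : ℚ_[p] | ‖y‖ ≤ (p:ℝ)^(k+1)} :=
      by
        intro y hy
        simp only [Set.mem_setOf_eq] at hy ⊢
        exact le_trans hy (pow_le_pow_right₀ hp1.le (Nat.le_succ k))
    have hfin : μ {y : ℚ_[p] | ‖y‖ ≤ (p:ℝ)^k} ≠ ⊤ := by
      rw [aux_ball_measure μ hμ k]; exact ENNReal.pow_ne_top (ENNReal.natCast_ne_top p)
    rw [measure_diff hsub ((hBmeas k).nullMeasurableSet) hfin,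
      aux_ball_measure μ hμ (k+1), aux_ball_measure μ hμ k]
  have hμSfin : ∀ k, μ (S k) < ⊤ := by
    intro k
    rw [hμS k]
    exact lt_of_le_of_lt tsub_le_self (ENNReal.pow_lt_top (ENNReal.natCast_lt_top p))
  have hμStoReal : ∀ k, (μ (S k)).toReal = (p:ℝ)^(k+1) - (p:ℝ)^k := by
    intro k
    rw [hμS k, ENNReal.toReal_sub_of_le
      (pow_le_pow_right₀ (by exact_mod_cast (Fact.out : p.Prime).one_lt.le) (Nat.le_succ k))
      (ENNReal.pow_ne_top (ENNReal.natCast_ne_top p))]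
    simp [ENNReal.toReal_pow]
  -- integrability and integrals on shells
  have hSint : ∀ k, IntegrableOn f (S k) μ := fun k =>
    (integrableOn_congr_fun (hconst k) (hSmeas k)).mpr
      (integrableOn_const (hμSfin k).ne)
  have hSval : ∀ k, ∫ y in S k, f y ∂μ = ((p:ℝ)^(k+1) - (p:ℝ)^k) * cst k := by
    intro k
    rw [setIntegral_congr_fun (hSmeas k) (hconst k), setIntegral_const, measureReal_def, hμStoReal k,
      smul_eq_mul]
  have hSnormval : ∀ k, ∫ y in S k, ‖f y‖ ∂μ = ((p:ℝ)^(k+1) - (p:ℝ)^k) * |cst k| := by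
    intro k
    have heq : Set.EqOn (fun y => ‖f y‖) (fun _ => |cst k|) (S k) := by
      intro y hy
      simp only [hconst k hy, Real.norm_eq_abs]
    rw [setIntegral_congr_fun (hSmeas k) heq, setIntegral_const, measureReal_def, hμStoReal k, smul_eq_mul]
  -- geometric structure
  set r : ℝ := (p:ℝ) ^ (-α) with hr
  have hr0 : 0 ≤ r := Real.rpow_nonneg hP.le _
  have hr1 : r < 1 := Real.rpow_lt_one_of_one_lt_of_neg hp1 (by linarith)
  have habs : ∀ k, ((p:ℝ)^(k+1) - (p:ℝ)^k) * |cst k|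
      = |u x| * (((p:ℝ) - 1) * (p:ℝ) ^ (-(α+1)) * r ^ k) := by
    intro k
    have h1 : |cst k| = |u x| * ((p:ℝ)^(k+1) : ℝ) ^ (-(α+1)) := by
      rw [hcst]
      rw [abs_mul, abs_of_nonneg (Real.rpow_nonneg (by positivity) _), zero_sub, abs_neg]
    rw [h1, hr]
    calc ((p:ℝ)^(k+1) - (p:ℝ)^k) * (|u x| * ((p:ℝ)^(k+1) : ℝ) ^ (-(α+1)))
        = |u x| * (((p:ℝ)^(k+1) : ℝ) ^ (-(α+1)) * ((p:ℝ)^(k+1) - (p:ℝ)^k)) := by ring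
      _ = |u x| * (((p:ℝ) - 1) * (p:ℝ) ^ (-(α+1)) * ((p:ℝ) ^ (-α)) ^ k) := by
          rw [aux_geom]
  have hterm : ∀ k, ((p:ℝ)^(k+1) - (p:ℝ)^k) * cst k
      = (0 - u x) * (((p:ℝ) - 1) * (p:ℝ) ^ (-(α+1))) * r ^ k := by
    intro k
    rw [hcst, hr]
    calc ((p:ℝ)^(k+1) - (p:ℝ)^k) * ((0 - u x) * ((p:ℝ)^(k+1) : ℝ) ^ (-(α+1)))
        = (0 - u x) * (((p:ℝ)^(k+1) : ℝ) ^ (-(α+1)) * ((p:ℝ)^(k+1) - (p:ℝ)^k)) := by ring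
      _ = (0 - u x) * (((p:ℝ) - 1) * (p:ℝ) ^ (-(α+1)) * ((p:ℝ) ^ (-α)) ^ k) := by
          rw [aux_geom]
      _ = (0 - u x) * (((p:ℝ) - 1) * (p:ℝ) ^ (-(α+1))) * ((p:ℝ) ^ (-α)) ^ k := by ring
  have hsum : Summable (fun k => ∫ y in S k, ‖f y‖ ∂μ) := by
    apply Summable.congr (f := fun k => |u x| * (((p:ℝ) - 1) * (p:ℝ) ^ (-(α+1)) * r ^ k))
    · exact (((summable_geometric_of_lt_one hr0 hr1).mul_left _).mul_left _)
    · intro k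
      rw [hSnormval k, habs k]
  -- union structure
  have hSdisj : Pairwise (Function.onFun Disjoint S) := by
    have H : ∀ a b : ℕ, a < b → Disjoint (S a) (S b) := by
      intro a b hab
      rw [Set.disjoint_left]
      intro y hya hyb
      apply hyb.2
      have h1 : ‖y‖ ≤ (p:ℝ)^(a+1) := hya.1
      have h2 : ((p:ℝ))^(a+1) ≤ (p:ℝ)^b :=
        pow_le_pow_right₀ (by exact_mod_cast (Fact.out : p.Prime).one_lt.le)
          (show a + 1 ≤ b by omega)
      exact le_trans h1 h2
    intro i j hij
    rcases hij.lt_or_gt with h | h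
    · exact H i j h
    · exact (H j i h).symm
  have hUeq : B0ᶜ = ⋃ k, S k := by
    have h1 : B0ᶜ = {y : ℚ_[p] | 1 < ‖y‖} := by
      ext y; simp [hB0, not_le]
    rw [h1, aux_shell_union, hS]
  have hUint : IntegrableOn f (⋃ k, S k) μ :=
    integrableOn_iUnion_of_summable_integral_norm hSint hsum
  have hInt : Integrable f μ := by
    have h2 : IntegrableOn f (B0 ∪ B0ᶜ) μ := hint.union (hUeq ▸ hUint)
    rwa [Set.union_compl_self, integrableOn_univ] at h2
  refine ⟨hInt, ?_⟩
  have hsplit2 : ∫ y, f y ∂μ = (∫ y in B0, f y ∂μ) + ∫ y in B0ᶜ, f y ∂μ :=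
    (integral_add_compl hB0meas hInt).symm
  have hUval : ∫ y in B0ᶜ, f y ∂μ
      = (0 - u x) * (((p:ℝ) - 1) * (p:ℝ) ^ (-(α+1))) * (1 - r)⁻¹ := by
    rw [hUeq, integral_iUnion hSmeas hSdisj hUint]
    rw [tsum_congr (fun k => (hSval k).trans (hterm k)), tsum_mul_left,
      tsum_geometric_of_lt_one hr0 hr1]
  rw [hsplit2, mul_add, hUval]
  congr 1
  have ea : (p:ℝ) ^ (-α) = ((p:ℝ) ^ α)⁻¹ := by
    rw [← Real.rpow_neg hP.le]
  have eb : (p:ℝ) ^ (-(α+1)) = ((p:ℝ) ^ (α+1))⁻¹ := by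
    rw [← Real.rpow_neg hP.le]
  have ha : 1 < (p:ℝ) ^ α := Real.one_lt_rpow_iff_of_pos hP |>.mpr (Or.inl ⟨hp1, hα⟩)
  have hb : 1 < (p:ℝ) ^ (α+1) := Real.one_lt_rpow_iff_of_pos hP |>.mpr (Or.inl ⟨hp1, by linarith⟩)
  rw [hr, ea, eb]
  calc (1 - (p:ℝ) ^ α) / (1 - ((p:ℝ) ^ (α+1))⁻¹) *
        ((0 - u x) * (((p:ℝ) - 1) * ((p:ℝ) ^ (α+1))⁻¹) * (1 - ((p:ℝ) ^ α)⁻¹)⁻¹)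
      = (p:ℝ) ^ α * ((p:ℝ) - 1) / ((p:ℝ) ^ (α+1) - 1) * u x :=
        aux_alg ((p:ℝ) ^ α) ((p:ℝ) ^ (α+1)) (p:ℝ) (u x) ha hb
end

section
/- Let p be a prime, m ≥ 1, α > 0, and let μ be the Haar measure on (ℚ_p, +) with μ(ℤ_p) = 1. Let c : ℕ → ℝ and define u : ℚ_p → ℝ as u(y) = c(j) if ‖y - (j : ℚ_p)‖ ≤ p^{-m} for some (necessarily unique) j < pᵐ, and u(y) = 0 if no such j exists. Fix i < pᵐ and x ∈ ℚ_p with ‖x - (i : ℚ_p)‖ ≤ p^{-m}. Then ∫_{ℤ_p} (u(y) - u(x)) ‖x - y‖^{-(α+1)} dμ(y) = Σ_{j < pᵐ, j ≠ i} p^{-m} (c(j) - c(i)) ‖(i : ℚ_p) - (j : ℚ_p)‖^{-(α+1)}. -/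
open MeasureTheory
open scoped ENNReal

variable {p : ℕ} [Fact p.Prime]

private lemma aux_exists (m : ℕ) (y : ℚ_[p]) (hy : ‖y‖ ≤ 1) :
    ∃ j : ℕ, j < p ^ m ∧ ‖y - (j : ℚ_[p])‖ ≤ (p : ℝ) ^ (-(m : ℤ)) := by
  set z : ℤ_[p] := ⟨y, hy⟩
  refine ⟨z.appr m, z.appr_lt m, ?_⟩
  have h := (PadicInt.norm_le_pow_iff_mem_span_pow (z - (z.appr m : ℤ_[p])) m).2
    (PadicInt.appr_spec m z)
  have hcoe : ((z - (z.appr m : ℤ_[p]) : ℤ_[p]) : ℚ_[p]) = y - (z.appr m : ℚ_[p]) := by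
    push_cast [z]
    rfl
  rwa [PadicInt.norm_def, hcoe] at h

private lemma aux_sep {m i j : ℕ} (hi : i < p ^ m) (hj : j < p ^ m) (hij : i ≠ j) :
    (p : ℝ) ^ (-(m : ℤ)) < ‖(i : ℚ_[p]) - (j : ℚ_[p])‖ := by
  by_contra h
  push_neg at h
  have hc : (((i : ℤ) - (j : ℤ) : ℤ) : ℚ_[p]) = (i : ℚ_[p]) - (j : ℚ_[p]) := by push_cast; ring
  rw [← hc] at h
  have hdvd := (Padic.norm_int_le_pow_iff_dvd ((i : ℤ) - (j : ℤ)) m).1 h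
  have : ((i : ℤ) - j) = 0 := by
    refine Int.eq_zero_of_abs_lt_dvd hdvd ?_
    have h1 : (i : ℤ) < (p : ℤ) ^ m := by exact_mod_cast hi
    have h2 : (j : ℤ) < (p : ℤ) ^ m := by exact_mod_cast hj
    rw [abs_sub_lt_iff]
    omega
  omega

/-- For a level-`m` locally constant function `u` on `ℤ_p` with ball values `c j`, the
Vladimirov integral over `ℤ_p` at a point `x` of the ball centered at `i` reduces to the
finite sum `Σ_{j ≠ i} p^{-m} (c j - c i) ‖i - j‖^{-(α+1)}`. -/
theorem stmt17 (p : ℕ) [Fact p.Prime]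
    [MeasurableSpace ℚ_[p]] [BorelSpace ℚ_[p]]
    (μ : Measure ℚ_[p]) [μ.IsAddHaarMeasure]
    (hμ : μ {x : ℚ_[p] | ‖x‖ ≤ 1} = 1)
    (m : ℕ) (hm : 1 ≤ m) (α : ℝ) (hα : 0 < α)
    (c : ℕ → ℝ) (u : ℚ_[p] → ℝ)
    (hu : ∀ j : ℕ, j < p ^ m → ∀ y : ℚ_[p],
      ‖y - (j : ℚ_[p])‖ ≤ (p : ℝ) ^ (-(m : ℤ)) → u y = c j)
    (hu0 : ∀ y : ℚ_[p],
      (∀ j : ℕ, j < p ^ m → ¬ ‖y - (j : ℚ_[p])‖ ≤ (p : ℝ) ^ (-(m : ℤ))) → u y = 0)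
    (i : ℕ) (hi : i < p ^ m)
    (x : ℚ_[p]) (hx : ‖x - (i : ℚ_[p])‖ ≤ (p : ℝ) ^ (-(m : ℤ))) :
    ∫ y in {y : ℚ_[p] | ‖y‖ ≤ 1}, (u y - u x) * ‖x - y‖ ^ (-(α + 1)) ∂μ =
      ∑ j ∈ (Finset.range (p ^ m)).erase i,
        (p : ℝ) ^ (-(m : ℤ)) * (c j - c i) * ‖(i : ℚ_[p]) - (j : ℚ_[p])‖ ^ (-(α + 1)) := by
  have hp1 : 1 < (p : ℝ) := by exact_mod_cast (Fact.out : p.Prime).one_lt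
  set r : ℝ := (p : ℝ) ^ (-(m : ℤ)) with hr
  have hr1 : r ≤ 1 := by
    rw [hr]
    apply zpow_le_one_of_nonpos₀ hp1.le
    simp
  set S : ℕ → Set ℚ_[p] := fun j => {y | ‖y - (j : ℚ_[p])‖ ≤ r} with hS
  have hSball : ∀ j, S j = Metric.closedBall (j : ℚ_[p]) r := by
    intro j
    ext y
    simp [hS, Metric.mem_closedBall, dist_eq_norm]
  have hSmeas : ∀ j, MeasurableSet (S j) := fun j => by
    rw [hSball]; exact measurableSet_closedBall
  -- pairwise disjoint
  have hdisj : ∀ j ∈ Finset.range (p ^ m), ∀ k ∈ Finset.range (p ^ m), j ≠ k →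
      Disjoint (S j) (S k) := by
    intro j hj k hk hjk
    rw [Finset.mem_range] at hj hk
    rw [Set.disjoint_left]
    intro y hyj hyk
    have hsep := aux_sep (p := p) hj hk hjk
    have : ‖(j : ℚ_[p]) - (k : ℚ_[p])‖ ≤ r := by
      have : (j : ℚ_[p]) - (k : ℚ_[p]) = (y - k) + (-(y - j)) := by ring
      rw [this]
      refine le_trans (Padic.nonarchimedean _ _) ?_
      rw [norm_neg]
      exact max_le hyk hyj
    exact absurd this (not_le.2 hsep)
  -- covering
  have hcover : {y : ℚ_[p] | ‖y‖ ≤ 1} = ⋃ j ∈ Finset.range (p ^ m), S j := by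
    ext y
    simp only [Set.mem_setOf_eq, Set.mem_iUnion, Finset.mem_range, hS]
    constructor
    · intro hy
      obtain ⟨j, hj, hjy⟩ := aux_exists (p := p) m y hy
      exact ⟨j, hj, hjy⟩
    · rintro ⟨j, hj, hjy⟩
      calc ‖y‖ = ‖(y - j) + (j : ℚ_[p])‖ := by ring_nf
        _ ≤ max ‖y - (j : ℚ_[p])‖ ‖((j : ℤ) : ℚ_[p])‖ := by
            rw [show ((j : ℤ) : ℚ_[p]) = (j : ℚ_[p]) by push_cast; rfl]
            exact Padic.nonarchimedean _ _
        _ ≤ 1 := max_le (le_trans hjy hr1) (Padic.norm_int_le_one _)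
  -- measure of each ball
  have hμS : ∀ j : ℕ, μ (S j) = μ (S 0) := by
    intro j
    have : S j = (fun y => (-(j : ℚ_[p])) + y) ⁻¹' (S 0) := by
      ext y
      simp only [hS, Set.mem_preimage, Set.mem_setOf_eq, Nat.cast_zero, sub_zero, neg_add_eq_sub]
    rw [this, measure_preimage_add]
  have hμtot : μ (⋃ j ∈ Finset.range (p ^ m), S j) = 1 := by rw [← hcover]; exact hμ
  have hμsum : (p ^ m : ℝ≥0∞) * μ (S 0) = 1 := by
    rw [measure_biUnion_finset ?_ (fun j _ => hSmeas j)] at hμtot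
    · rw [Finset.sum_congr rfl (fun j _ => hμS j), Finset.sum_const, Finset.card_range,
        nsmul_eq_mul] at hμtot
      exact_mod_cast hμtot
    · intro a ha b hb hab
      exact hdisj a ha b hb hab
  have hpm0 : (p ^ m : ℝ≥0∞) ≠ 0 := by
    simp [pow_ne_zero, Nat.Prime.ne_zero (Fact.out : p.Prime)]
  have hpmtop : (p ^ m : ℝ≥0∞) ≠ ⊤ := by simp
  have hμS0 : μ (S 0) = (p ^ m : ℝ≥0∞)⁻¹ := by
    have h2 := congrArg (fun t => (p ^ m : ℝ≥0∞)⁻¹ * t) hμsum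
    simpa [← mul_assoc, ENNReal.inv_mul_cancel hpm0 hpmtop] using h2
  have htoReal : ∀ j : ℕ, (μ (S j)).toReal = r := by
    intro j
    rw [hμS j, hμS0, hr]
    rw [zpow_neg, zpow_natCast]
    simp [ENNReal.toReal_inv]
  have hux : u x = c i := hu i hi x hx
  have hval : ∀ j ∈ Finset.range (p ^ m), Set.EqOn
      (fun y => (u y - u x) * ‖x - y‖ ^ (-(α + 1)))
      (fun _ => if j = i then (0 : ℝ)
        else (c j - c i) * ‖(i : ℚ_[p]) - (j : ℚ_[p])‖ ^ (-(α + 1))) (S j) := by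
    intro j hj y hy
    rw [Finset.mem_range] at hj
    have huy : u y = c j := hu j hj y hy
    by_cases hji : j = i
    · subst hji
      simp [huy, hux]
    · have hsep := aux_sep (p := p) hi hj (fun h => hji h.symm)
      have hrest : ‖(x - (i : ℚ_[p])) + (-(y - (j : ℚ_[p])))‖ ≤ r := by
        refine le_trans (Padic.nonarchimedean _ _) ?_
        rw [norm_neg]
        exact max_le hx hy
      have hnorm : ‖x - y‖ = ‖(i : ℚ_[p]) - (j : ℚ_[p])‖ := by
        have hxy : x - y = ((i : ℚ_[p]) - (j : ℚ_[p])) +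
            ((x - (i : ℚ_[p])) + (-(y - (j : ℚ_[p])))) := by ring
        rw [hxy, Padic.add_eq_max_of_ne (lt_of_le_of_lt hrest hsep).ne']
        exact max_eq_left (le_of_lt (lt_of_le_of_lt hrest hsep))
      simp [huy, hux, hnorm, hji]
  have hint : ∀ j ∈ Finset.range (p ^ m), IntegrableOn
      (fun y => (u y - u x) * ‖x - y‖ ^ (-(α + 1))) (S j) μ := by
    intro j hj
    have hconst : IntegrableOn
        (fun _ : ℚ_[p] => if j = i then (0 : ℝ)
          else (c j - c i) * ‖(i : ℚ_[p]) - (j : ℚ_[p])‖ ^ (-(α + 1))) (S j) μ := by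
      refine integrableOn_const ?_ enorm_ne_top
      rw [hμS j, hμS0]
      exact (ENNReal.inv_lt_top.2 (by positivity)).ne
    exact hconst.congr_fun (hval j hj).symm (hSmeas j)
  rw [hcover, integral_biUnion_finset (Finset.range (p ^ m)) (fun j _ => hSmeas j)
    (fun a ha b hb hab => hdisj a (Finset.mem_coe.1 ha) b (Finset.mem_coe.1 hb) hab) hint]
  have heach : ∀ j ∈ Finset.range (p ^ m),
      ∫ y in S j, (u y - u x) * ‖x - y‖ ^ (-(α + 1)) ∂μ =
      if j = i then (0 : ℝ)
        else r * (c j - c i) * ‖(i : ℚ_[p]) - (j : ℚ_[p])‖ ^ (-(α + 1)) := by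
    intro j hj
    rw [setIntegral_congr_fun (hSmeas j) (hval j hj), setIntegral_const, Measure.real, htoReal]
    by_cases hji : j = i
    · simp [hji]
    · simp only [hji, if_false, smul_eq_mul]
      ring
  rw [Finset.sum_congr rfl heach]
  have hz := Finset.sum_erase (Finset.range (p ^ m)) (a := i)
    (f := fun j => if j = i then (0 : ℝ)
      else r * (c j - c i) * ‖(i : ℚ_[p]) - (j : ℚ_[p])‖ ^ (-(α + 1))) (by simp)
  rw [← hz]
  refine Finset.sum_congr rfl fun j hj => ?_
  simp [Finset.ne_of_mem_erase hj]
end
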